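/- arXiv:0908.1645 — 2 statements merged into one kernel-verified Lean document; each statement's English description precedes it below -/
import Mathlib

section
/- Let Λ(E_6) be the E_6 root lattice realized inside the Picard lattice of a cubic surface (basis h, l_1,…,l_6 with h² = 1, l_i² = −1, other products zero, K = −3h + Σl_i) as the orthogonal complement of K. Let ρ be the automorphism induced by the E_6 diagram automorphism with ρ(α_1) = α_6, ρ(α_2) = α_5, and ρ fixing α_3, α_4 (where α_1 = l_1 − l_2, α_2 = l_2 − l_3, α_3 = h − l_1 − l_2 − l_3, α_i = l_{i−1} − l_i for i = 4,5,6). Then the ρ-fixed sublattice Λ(E_6)^ρ equals {a·h + Σ a_i·l_i : a_1 + a_6 = a_2 + a_5 = a_3 + a_4 = −a}, and it is freely generated by h − l_1 − l_2 − l_3, l_1 − l_6, l_2 − l_5, l_3 − l_4; moreover with respect to the negative intersection form it is isometric to the D_4 root lattice. -/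
/-!
On `Λ(E₆) = K^⊥`, which the simple roots span over `ℤ`, the involution `ρ` agrees with the
explicit linear map `diagramInvolution`, `τ : a h + ∑ aᵢ lᵢ ↦ a h - ∑ (a + a₇₋ᵢ) lᵢ`, since both are linear and they
agree on the simple roots. The fixed vectors of `τ` are exactly those with
`a₁ + a₆ = a₂ + a₅ = a₃ + a₄ = -a`, and they lie in `K^⊥` automatically. The coordinates
`(a, a₁ + a, a₂ + a, a₃ + a)` are dual to the four proposed generators, which gives at once that
they are linearly independent and that they span the fixed vectors of `τ`.
-/

namespace CubicSurface

open Submodule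

def intersection (x y : Fin 7 → ℤ) : ℤ := x 0 * y 0 - ∑ i : Fin 6, x i.succ * y i.succ

def hyperplane : Fin 7 → ℤ := Pi.single 0 1

def exceptional (i : Fin 6) : Fin 7 → ℤ := Pi.single i.succ 1

def canonical : Fin 7 → ℤ := -(3 : ℤ) • hyperplane + ∑ i : Fin 6, exceptional i

def simpleRoot : Fin 6 → Fin 7 → ℤ :=
  ![exceptional 0 - exceptional 1, exceptional 1 - exceptional 2,
    hyperplane - exceptional 0 - exceptional 1 - exceptional 2,
    exceptional 2 - exceptional 3, exceptional 3 - exceptional 4, exceptional 4 - exceptional 5]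

def d4Root : Fin 4 → Fin 7 → ℤ :=
  ![hyperplane - exceptional 0 - exceptional 1 - exceptional 2,
    exceptional 0 - exceptional 5, exceptional 1 - exceptional 4, exceptional 2 - exceptional 3]

theorem intersection_canonical (x : Fin 7 → ℤ) :
    intersection x canonical = -3 * x 0 - (x 1 + x 2 + x 3 + x 4 + x 5 + x 6) := by
  have hK : canonical = ![-3, 1, 1, 1, 1, 1, 1] := by decide
  simp only [intersection, hK, Fin.sum_univ_six, Fin.isValue, Nat.succ_eq_add_one, Nat.reduceAdd,
    Int.reduceNeg, Matrix.cons_val_zero, Matrix.cons_val_succ, Fin.succ_zero_eq_one,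
    Fin.succ_one_eq_two, Matrix.cons_val_one, Fin.reduceSucc, Matrix.cons_val, mul_one]
  ring

theorem mem_span_simpleRoot {x : Fin 7 → ℤ} (hx : intersection x canonical = 0) :
    x ∈ span ℤ (Set.range simpleRoot) := by
  rw [intersection_canonical] at hx
  refine (mem_span_range_iff_exists_fun ℤ).2
    ⟨![x 1 + x 0, x 1 + x 2 + 2 * x 0, x 0, x 1 + x 2 + x 3 + 3 * x 0, -x 5 - x 6, -x 6], ?_⟩
  have hs : simpleRoot = ![![0, 1, -1, 0, 0, 0, 0], ![0, 0, 1, -1, 0, 0, 0],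
      ![1, -1, -1, -1, 0, 0, 0], ![0, 0, 0, 1, -1, 0, 0], ![0, 0, 0, 0, 1, -1, 0],
      ![0, 0, 0, 0, 0, 1, -1]] := by decide
  ext j
  fin_cases j <;> simp [hs, Fin.sum_univ_six] <;> omega

def diagramInvolution : (Fin 7 → ℤ) →ₗ[ℤ] (Fin 7 → ℤ) where
  toFun x := ![x 0, -x 0 - x 6, -x 0 - x 5, -x 0 - x 4, -x 0 - x 3, -x 0 - x 2, -x 0 - x 1]
  map_add' x y := by ext j; fin_cases j <;> simp <;> ring
  map_smul' c x := by ext j; fin_cases j <;> simp <;> ring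

theorem diagramInvolution_simpleRoot :
    ∀ i, diagramInvolution (simpleRoot i) = simpleRoot (![5, 4, 2, 3, 1, 0] i) := by
  decide

theorem diagramInvolution_apply_eq_self_iff {x : Fin 7 → ℤ} :
    diagramInvolution x = x ↔ x 1 + x 6 = -x 0 ∧ x 2 + x 5 = -x 0 ∧ x 3 + x 4 = -x 0 := by
  simp only [diagramInvolution, LinearMap.coe_mk, AddHom.coe_mk, funext_iff, Fin.forall_fin_succ,
    Fin.isValue, Nat.succ_eq_add_one, Nat.reduceAdd, Matrix.cons_val_zero, Matrix.cons_val_succ,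
    Fin.succ_zero_eq_one, Fin.succ_one_eq_two, Fin.reduceSucc, Matrix.cons_val_fin_one,
    IsEmpty.forall_iff, and_true, true_and]
  omega

theorem intersection_canonical_eq_zero_of_diagramInvolution_apply_eq_self {x : Fin 7 → ℤ}
    (hx : diagramInvolution x = x) : intersection x canonical = 0 := by
  rw [diagramInvolution_apply_eq_self_iff] at hx
  rw [intersection_canonical]
  omega

theorem setOf_orthogonal_and_fixed_eq {ρ : (Fin 7 → ℤ) →ₗ[ℤ] (Fin 7 → ℤ)}
    (hρ : ∀ i, ρ (simpleRoot i) = diagramInvolution (simpleRoot i)) :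
    {x | intersection x canonical = 0 ∧ ρ x = x} =
      (LinearMap.eqLocus diagramInvolution LinearMap.id : Set (Fin 7 → ℤ)) := by
  have hρx {x} (hx : intersection x canonical = 0) : ρ x = diagramInvolution x :=
    LinearMap.eqOn_span (Set.forall_mem_range.2 hρ) (mem_span_simpleRoot hx)
  ext x
  constructor
  · rintro ⟨hK, hx⟩
    exact (hρx hK).symm.trans hx
  · intro hx
    have hK := intersection_canonical_eq_zero_of_diagramInvolution_apply_eq_self hx
    exact ⟨hK, (hρx hK).trans hx⟩

def d4Coord : (Fin 7 → ℤ) →ₗ[ℤ] (Fin 4 → ℤ) where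
  toFun x := ![x 0, x 1 + x 0, x 2 + x 0, x 3 + x 0]
  map_add' x y := by ext j; fin_cases j <;> simp <;> ring
  map_smul' c x := by ext j; fin_cases j <;> simp <;> ring

theorem d4Coord_d4Root : ∀ i, d4Coord (d4Root i) = Pi.single i 1 := by
  decide

theorem linearIndependent_d4Root : LinearIndependent ℤ d4Root := by
  have hcomp : d4Coord ∘ d4Root = Pi.basisFun ℤ (Fin 4) := by
    ext i : 1
    simp [d4Coord_d4Root]
  refine LinearIndependent.of_comp d4Coord ?_
  rw [hcomp]
  exact (Pi.basisFun ℤ (Fin 4)).linearIndependent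

theorem sum_d4Coord_smul_d4Root {x : Fin 7 → ℤ} (hx : diagramInvolution x = x) :
    ∑ i, d4Coord x i • d4Root i = x := by
  rw [diagramInvolution_apply_eq_self_iff] at hx
  have hd : d4Root = ![![1, -1, -1, -1, 0, 0, 0], ![0, 1, 0, 0, 0, 0, -1],
      ![0, 0, 1, 0, 0, -1, 0], ![0, 0, 0, 1, -1, 0, 0]] := by decide
  ext j
  fin_cases j <;> simp [d4Coord, hd, Fin.sum_univ_four] <;> omega

theorem span_d4Root :
    span ℤ (Set.range d4Root) = LinearMap.eqLocus diagramInvolution LinearMap.id := by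
  have hfixed : ∀ i, diagramInvolution (d4Root i) = d4Root i := by decide
  refine le_antisymm (span_le.2 (Set.range_subset_iff.2 hfixed)) fun x hx => ?_
  rw [← sum_d4Coord_smul_d4Root hx]
  exact sum_mem fun i _ => smul_mem _ _ (subset_span ⟨i, rfl⟩)

theorem neg_intersection_d4Root (i j : Fin 4) :
    -intersection (d4Root i) (d4Root j) =
      !![2, -1, -1, -1; -1, 2, 0, 0; -1, 0, 2, 0; -1, 0, 0, 2] i j := by
  fin_cases i <;> fin_cases j <;> decide

end CubicSurface

open CubicSurface

/-- In the Picard lattice `Fin 7 → ℤ` of a cubic surface (basis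
`h = e₀`, `l i = e_{i+1}`, intersection form `b` with `h² = 1`, `lᵢ² = −1`, other
products `0`, `K = −3h + Σ lᵢ`), let `ρ` be the automorphism induced by the `E 6`
diagram automorphism acting on the simple roots `α` of `Λ(E6) = K^⊥` as stated.  Then
the `ρ`-fixed part of `Λ(E6)` equals
`{x : x₁ + x₆ = x₂ + x₅ = x₃ + x₄ = −x₀}`, it is freely generated by
`γ 0 = h − l₁ − l₂ − l₃`, `γ 1 = l₁ − l₆`, `γ 2 = l₂ − l₅`, `γ 3 = l₃ − l₄`, and with
respect to `−b` the Gram matrix of these generators is the `D 4` Cartan matrix, so it is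
isometric to the `D 4` root lattice. -/
theorem E6_fixed_lattice_is_D4
    (b : (Fin 7 → ℤ) → (Fin 7 → ℤ) → ℤ)
    (hb : ∀ x y, b x y = x 0 * y 0 - ∑ i : Fin 6, x i.succ * y i.succ)
    (h : Fin 7 → ℤ) (l : Fin 6 → Fin 7 → ℤ)
    (hh : h = Pi.single 0 1)
    (hl : ∀ i, l i = Pi.single i.succ 1)
    (K : Fin 7 → ℤ)
    (hK : K = -(3 : ℤ) • h + ∑ i : Fin 6, l i)
    (α : Fin 6 → Fin 7 → ℤ)
    (hα0 : α 0 = l 0 - l 1) (hα1 : α 1 = l 1 - l 2)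
    (hα2 : α 2 = h - l 0 - l 1 - l 2)
    (hα3 : α 3 = l 2 - l 3) (hα4 : α 4 = l 3 - l 4) (hα5 : α 5 = l 4 - l 5)
    (ρ : (Fin 7 → ℤ) →ₗ[ℤ] (Fin 7 → ℤ))
    (hρ0 : ρ (α 0) = α 5) (hρ5 : ρ (α 5) = α 0)
    (hρ1 : ρ (α 1) = α 4) (hρ4 : ρ (α 4) = α 1)
    (hρ2 : ρ (α 2) = α 2) (hρ3 : ρ (α 3) = α 3)
    (γ : Fin 4 → Fin 7 → ℤ)
    (hγ0 : γ 0 = h - l 0 - l 1 - l 2)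
    (hγ1 : γ 1 = l 0 - l 5) (hγ2 : γ 2 = l 1 - l 4) (hγ3 : γ 3 = l 2 - l 3)
    (D : Matrix (Fin 4) (Fin 4) ℤ)
    (hD : D = !![2, -1, -1, -1;
                 -1, 2, 0, 0;
                 -1, 0, 2, 0;
                 -1, 0, 0, 2]) :
    ({x | b x K = 0 ∧ ρ x = x} =
      {x | x 1 + x 6 = -(x 0) ∧ x 2 + x 5 = -(x 0) ∧ x 3 + x 4 = -(x 0)}) ∧
    ((Submodule.span ℤ (Set.range γ) : Set (Fin 7 → ℤ)) = {x | b x K = 0 ∧ ρ x = x}) ∧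
    LinearIndependent ℤ γ ∧
    (∀ i j, -(b (γ i) (γ j)) = D i j) := by
  obtain rfl : b = intersection := funext fun x => funext (hb x)
  obtain rfl : h = hyperplane := hh
  obtain rfl : l = exceptional := funext hl
  obtain rfl : K = canonical := hK
  obtain rfl : α = simpleRoot := by funext i; fin_cases i <;> assumption
  obtain rfl : γ = d4Root := by funext i; fin_cases i <;> assumption
  subst hD
  have hfixed := setOf_orthogonal_and_fixed_eq (ρ := ρ) fun i => by
    fin_cases i <;> rw [diagramInvolution_simpleRoot] <;> assumption
  refine ⟨?_, ?_, linearIndependent_d4Root, neg_intersection_d4Root⟩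
  · rw [hfixed]
    ext x
    exact diagramInvolution_apply_eq_self_iff
  · rw [hfixed, span_d4Root]
end

section
/- On a cubic surface (lattice as above), every line belongs to exactly 5 triangles. -/
/-!
If `e, x, y` form a triangle, then `D = K + e + x + y` satisfies `D·K = 0` and `D² = 0`; since
`K² = 3 > 0`, the form is negative definite on `K^⊥`, so `D = 0`, i.e. `y = -(K + e + x)`.
Conversely, for every line `x` meeting `e` the class `-(K + e + x)` is again a line meeting
both. Hence the triangles through `e` are the orbits of the fixed-point-free involution
`x ↦ -(K + e + x)` on the lines meeting `e`. The 27 lines are found by bounding coordinates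
(Cauchy–Schwarz on `e·K = e² = -1`), and each of them meets exactly ten others.
-/

open Finset

theorem Finset.card_eq_two_mul_card_image {α β : Type*} [DecidableEq α] [DecidableEq β]
    {s : Finset α} {f : α → β} (σ : α → α) (hσs : ∀ x ∈ s, σ x ∈ s) (hσ : ∀ x ∈ s, σ x ≠ x)
    (hf : ∀ x ∈ s, ∀ y ∈ s, f y = f x ↔ y = x ∨ y = σ x) :
    #s = 2 * #(s.image f) := by
  rw [card_eq_sum_card_image f s, sum_const_nat, mul_comm]
  intro b hb
  obtain ⟨x, hx, rfl⟩ := mem_image.1 hb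
  have hfibre : {y ∈ s | f y = f x} = {x, σ x} := by
    ext y
    simp only [mem_filter, mem_insert, mem_singleton]
    constructor
    · exact fun ⟨hy, hfy⟩ => (hf x hx y hy).1 hfy
    · rintro (rfl | rfl)
      · exact ⟨hx, rfl⟩
      · exact ⟨hσs x hx, (hf x hx _ (hσs x hx)).2 (Or.inr rfl)⟩
  rw [hfibre, card_pair (hσ x hx).symm]

theorem Int.mul_sub_nonneg {z s : ℤ} (hs : |s| ≤ 1) : 0 ≤ z * (z - s) := by
  rw [abs_le] at hs
  rcases lt_trichotomy z 0 with hz | rfl | hz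
  · exact mul_nonneg_of_nonpos_of_nonpos hz.le (by omega)
  · simp
  · exact mul_nonneg hz.le (by omega)

namespace CubicSurface

section Lattice

variable {M : Type*} [AddCommGroup M] (B : LinearMap.BilinForm ℤ M) (K : M)

def IsLine (e : M) : Prop := B e e = -1 ∧ B e K = -1

def IsTriangle (t : Finset M) : Prop :=
  #t = 3 ∧ ↑t ⊆ {e | IsLine B K e} ∧ ∀ e ∈ t, ∀ e' ∈ t, e ≠ e' → B e e' = 1

-- The third line in the plane through `e` and `x`, a hyperplane section having class `-K`.
def residual (e x : M) : M := -(K + e + x)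

variable {B K}

theorem residual_residual (e x : M) : residual K e (residual K e x) = x := by
  simp only [residual]; abel

theorem IsLine.ne_of_apply_eq_one {e x : M} (he : IsLine B K e) (hex : B e x = 1) : e ≠ x := by
  rintro rfl
  have := he.1
  omega

theorem IsLine.residual (hB : B.IsSymm) (hK : B K K = 3) {e x : M} (he : IsLine B K e)
    (hx : IsLine B K x) (hex : B e x = 1) :
    IsLine B K (residual K e x) ∧ B e (residual K e x) = 1 ∧ B x (residual K e x) = 1 := by
  obtain ⟨hee, heK⟩ := he
  obtain ⟨hxx, hxK⟩ := hx
  have hxe := hB.eq x e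
  have hKe := hB.eq K e
  have hKx := hB.eq K x
  simp only [IsLine, CubicSurface.residual, map_neg, map_add, LinearMap.neg_apply,
    LinearMap.add_apply]
  omega

theorem eq_residual_of_apply_eq_one (hB : B.IsSymm) (hK : B K K = 3)
    (hKperp : ∀ D, B D K = 0 → B D D = 0 → D = 0) {e x y : M} (he : IsLine B K e)
    (hx : IsLine B K x) (hy : IsLine B K y) (hex : B e x = 1) (hey : B e y = 1)
    (hxy : B x y = 1) : y = residual K e x := by
  obtain ⟨hee, heK⟩ := he
  obtain ⟨hxx, hxK⟩ := hx
  obtain ⟨hyy, hyK⟩ := hy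
  have hxe := hB.eq x e
  have hye := hB.eq y e
  have hyx := hB.eq y x
  have hKe := hB.eq K e
  have hKx := hB.eq K x
  have hKy := hB.eq K y
  have hD : K + e + x + y = 0 := by
    apply hKperp <;> simp only [map_add, LinearMap.add_apply] <;> omega
  exact eq_neg_of_add_eq_zero_right hD

theorem isTriangle_triple [DecidableEq M] (hB : B.IsSymm) {a b c : M} (ha : IsLine B K a)
    (hb : IsLine B K b) (hc : IsLine B K c) (hab : B a b = 1) (hac : B a c = 1)
    (hbc : B b c = 1) : IsTriangle B K {a, b, c} := by
  refine ⟨card_eq_three.2 ⟨a, b, c, ha.ne_of_apply_eq_one hab, ha.ne_of_apply_eq_one hac,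
    hb.ne_of_apply_eq_one hbc, rfl⟩, ?_, ?_⟩
  · simp only [coe_insert, coe_singleton, Set.insert_subset_iff, Set.singleton_subset_iff,
      Set.mem_ofPred_eq]
    exact ⟨ha, hb, hc⟩
  · simp only [mem_insert, mem_singleton]
    rintro x (rfl | rfl | rfl) y (rfl | rfl | rfl) hxy <;>
      first | exact absurd rfl hxy | assumption | (rw [hB.eq]; assumption)

theorem isTriangle_and_mem_iff [DecidableEq M] (hB : B.IsSymm) (hK : B K K = 3)
    (hKperp : ∀ D, B D K = 0 → B D D = 0 → D = 0) {e : M} {t : Finset M} (he : IsLine B K e) :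
    IsTriangle B K t ∧ e ∈ t ↔ ∃ x, (IsLine B K x ∧ B e x = 1) ∧ {e, x, residual K e x} = t := by
  constructor
  · rintro ⟨⟨hcard, hlines, hmeet⟩, het⟩
    obtain ⟨x, y, hxy, hpair⟩ := card_eq_two.1 (by rw [card_erase_of_mem het, hcard])
    have hx : x ∈ t.erase e := by simp [hpair]
    have hy : y ∈ t.erase e := by simp [hpair]
    rw [mem_erase] at hx hy
    have hex := hmeet e het x hx.2 (Ne.symm hx.1)
    have hey := hmeet e het y hy.2 (Ne.symm hy.1)
    have hxy' := hmeet x hx.2 y hy.2 hxy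
    refine ⟨x, ⟨hlines hx.2, hex⟩, ?_⟩
    rw [← eq_residual_of_apply_eq_one hB hK hKperp he (hlines hx.2) (hlines hy.2) hex hey hxy',
      ← hpair, insert_erase het]
  · rintro ⟨x, ⟨hx, hex⟩, rfl⟩
    obtain ⟨hr, her, hxr⟩ := he.residual hB hK hx hex
    exact ⟨isTriangle_triple hB he hx hr hex her hxr, mem_insert_self _ _⟩

theorem triple_residual_eq_iff [DecidableEq M] {e x y : M} (he : IsLine B K e)
    (hey : B e y = 1) :
    ({e, y, residual K e y} : Finset M) = {e, x, residual K e x} ↔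
      y = x ∨ y = residual K e x := by
  constructor
  · intro h
    have hy : y ∈ ({e, x, residual K e x} : Finset M) := h ▸ by simp
    simpa [(he.ne_of_apply_eq_one hey).symm] using hy
  · rintro (rfl | rfl)
    · rfl
    · rw [residual_residual, pair_comm]

theorem two_mul_ncard_triangles_through [DecidableEq M] (hB : B.IsSymm) (hK : B K K = 3)
    (hKperp : ∀ D, B D K = 0 → B D D = 0 → D = 0) {e : M} (he : IsLine B K e) {s : Finset M}
    (hs : ∀ x, x ∈ s ↔ IsLine B K x ∧ B e x = 1) :
    2 * {t | IsTriangle B K t ∧ e ∈ t}.ncard = #s := by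
  have himage : {t | IsTriangle B K t ∧ e ∈ t} =
      ↑(s.image fun x => ({e, x, residual K e x} : Finset M)) := by
    ext t
    simp only [Set.mem_ofPred_eq, coe_image, Set.mem_image, mem_coe, hs]
    exact isTriangle_and_mem_iff hB hK hKperp he
  rw [himage, Set.ncard_coe_finset]
  refine (card_eq_two_mul_card_image (residual K e) (fun x hx => ?_) (fun x hx => ?_)
    (fun x _ y hy => triple_residual_eq_iff he ((hs y).1 hy).2)).symm
  · obtain ⟨hx, hex⟩ := (hs x).1 hx
    obtain ⟨hr, her, -⟩ := he.residual hB hK hx hex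
    exact (hs _).2 ⟨hr, her⟩
  · obtain ⟨hx, hex⟩ := (hs x).1 hx
    exact (hx.ne_of_apply_eq_one (he.residual hB hK hx hex).2.2).symm

end Lattice

section Cubic

def intersectionForm : LinearMap.BilinForm ℤ (Fin 7 → ℤ) :=
  LinearMap.mk₂ ℤ (fun x y => x 0 * y 0 - ∑ i : Fin 6, x i.succ * y i.succ)
    (fun x₁ x₂ y => by simp only [Pi.add_apply, add_mul, sum_add_distrib]; ring)
    (fun c x y => by simp only [Pi.smul_apply, smul_eq_mul, mul_assoc, ← mul_sum]; ring)
    (fun x y₁ y₂ => by simp only [Pi.add_apply, mul_add, sum_add_distrib]; ring)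
    (fun c x y => by simp only [Pi.smul_apply, smul_eq_mul, mul_left_comm _ c, ← mul_sum]; ring)

theorem intersectionForm_apply (x y : Fin 7 → ℤ) :
    intersectionForm x y = x 0 * y 0 - ∑ i : Fin 6, x i.succ * y i.succ := rfl

def canonicalClass : Fin 7 → ℤ := Fin.cons (-3) fun _ => 1

theorem intersectionForm_canonicalClass (x : Fin 7 → ℤ) :
    intersectionForm x canonicalClass = -3 * x 0 - ∑ i : Fin 6, x i.succ := by
  simp [intersectionForm_apply, canonicalClass, mul_comm]

theorem intersectionForm_isSymm : intersectionForm.IsSymm :=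
  ⟨fun x y => by simp only [intersectionForm_apply, mul_comm]⟩

theorem intersectionForm_canonicalClass_self :
    intersectionForm canonicalClass canonicalClass = 3 := by decide

theorem eq_zero_of_orthogonal_canonicalClass (D : Fin 7 → ℤ)
    (hK : intersectionForm D canonicalClass = 0) (hD : intersectionForm D D = 0) : D = 0 := by
  rw [intersectionForm_canonicalClass] at hK
  rw [intersectionForm_apply] at hD
  have hcs := sq_sum_le_card_mul_sum_sq (s := univ) (f := fun i : Fin 6 => D i.succ)
  simp only [card_univ, Fintype.card_fin, Nat.cast_ofNat, sq] at hcs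
  have h0 : D 0 = 0 := by nlinarith
  have hsq : ∑ i : Fin 6, D i.succ * D i.succ = 0 := by rw [h0] at hD; linarith
  have hsucc : ∀ i : Fin 6, D i.succ = 0 := fun i =>
    mul_self_eq_zero.1 ((sum_eq_zero_iff_of_nonneg fun j _ => mul_self_nonneg (D j.succ)).1 hsq i
      (mem_univ i))
  ext i
  exact Fin.cases h0 hsucc i

-- `l i`, then `h - l i - l j` for `i < j`, then `2h - ∑ l + l j`.
def lines : Finset (Fin 7 → ℤ) :=
  {![0, 1, 0, 0, 0, 0, 0], ![0, 0, 1, 0, 0, 0, 0], ![0, 0, 0, 1, 0, 0, 0],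
   ![0, 0, 0, 0, 1, 0, 0], ![0, 0, 0, 0, 0, 1, 0], ![0, 0, 0, 0, 0, 0, 1],
   ![1, -1, -1, 0, 0, 0, 0], ![1, -1, 0, -1, 0, 0, 0], ![1, -1, 0, 0, -1, 0, 0],
   ![1, -1, 0, 0, 0, -1, 0], ![1, -1, 0, 0, 0, 0, -1], ![1, 0, -1, -1, 0, 0, 0],
   ![1, 0, -1, 0, -1, 0, 0], ![1, 0, -1, 0, 0, -1, 0], ![1, 0, -1, 0, 0, 0, -1],
   ![1, 0, 0, -1, -1, 0, 0], ![1, 0, 0, -1, 0, -1, 0], ![1, 0, 0, -1, 0, 0, -1],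
   ![1, 0, 0, 0, -1, -1, 0], ![1, 0, 0, 0, -1, 0, -1], ![1, 0, 0, 0, 0, -1, -1],
   ![2, 0, -1, -1, -1, -1, -1], ![2, -1, 0, -1, -1, -1, -1], ![2, -1, -1, 0, -1, -1, -1],
   ![2, -1, -1, -1, 0, -1, -1], ![2, -1, -1, -1, -1, 0, -1], ![2, -1, -1, -1, -1, -1, 0]}

theorem isLine_coordinates {e : Fin 7 → ℤ} (he : IsLine intersectionForm canonicalClass e) :
    e 0 ∈ ({0, 1, 2} : Finset ℤ) ∧
      Fin.tail e ∈ Fintype.piFinset fun _ => ({0, if e 0 = 0 then 1 else -1} : Finset ℤ) := by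
  obtain ⟨hee, heK⟩ := he
  rw [intersectionForm_apply] at hee
  rw [intersectionForm_canonicalClass] at heK
  have hcs := sq_sum_le_card_mul_sum_sq (s := univ) (f := fun i : Fin 6 => e i.succ)
  simp only [card_univ, Fintype.card_fin, Nat.cast_ofNat, sq] at hcs
  have h0 : e 0 = 0 ∨ e 0 = 1 ∨ e 0 = 2 := by
    have : 0 ≤ e 0 := by nlinarith
    have : e 0 ≤ 2 := by nlinarith
    omega
  -- `∑ eᵢ (eᵢ - s)` is a sum of nonnegative terms that vanishes, so every `eᵢ ∈ {0, s}`.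
  set s : ℤ := if e 0 = 0 then 1 else -1 with hs
  have hs1 : |s| ≤ 1 := by rw [hs]; split_ifs <;> norm_num
  have hsum : ∑ i : Fin 6, e i.succ * (e i.succ - s) = 0 := by
    simp only [mul_sub, sum_sub_distrib, ← sum_mul]
    rcases h0 with h0 | h0 | h0 <;> simp only [hs, h0] at hee heK ⊢ <;> norm_num <;> linarith
  have hcoord (i : Fin 6) : e i.succ = 0 ∨ e i.succ = s := by
    have := (sum_eq_zero_iff_of_nonneg fun j _ => Int.mul_sub_nonneg hs1).1 hsum i (mem_univ i)
    rcases mul_eq_zero.1 this with h | h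
    · exact Or.inl h
    · exact Or.inr (sub_eq_zero.1 h)
  exact ⟨by simp only [mem_insert, mem_singleton]; omega,
    Fintype.mem_piFinset.2 fun i => by simpa [Fin.tail] using hcoord i⟩

theorem mem_lines_of_isLine_cons : ∀ a ∈ ({0, 1, 2} : Finset ℤ),
    ∀ b ∈ Fintype.piFinset fun _ : Fin 6 => ({0, if a = 0 then 1 else -1} : Finset ℤ),
    IsLine intersectionForm canonicalClass (Fin.cons a b) →
      (Fin.cons a b : Fin 7 → ℤ) ∈ lines := by
  unfold IsLine
  decide

theorem isLine_of_mem_lines : ∀ e ∈ lines, IsLine intersectionForm canonicalClass e := by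
  unfold IsLine
  decide

theorem isLine_iff_mem_lines (e : Fin 7 → ℤ) :
    IsLine intersectionForm canonicalClass e ↔ e ∈ lines := by
  refine ⟨fun he => ?_, isLine_of_mem_lines e⟩
  obtain ⟨h0, htail⟩ := isLine_coordinates he
  rw [← Fin.cons_self_tail e] at he ⊢
  exact mem_lines_of_isLine_cons _ h0 _ htail he

theorem card_lines_meeting : ∀ e ∈ lines, #{x ∈ lines | intersectionForm e x = 1} = 10 := by
  decide

end Cubic

end CubicSurface

open CubicSurface

/-- On a cubic surface (Picard lattice `Fin 7 → ℤ`, intersection form `b`,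
`K = −3h + Σ lᵢ`, lines `L`, triangles `T` as unordered triples of pairwise-meeting
lines), every line belongs to exactly 5 triangles. -/
theorem cubic_surface_line_in_five_triangles
    (b : (Fin 7 → ℤ) → (Fin 7 → ℤ) → ℤ)
    (hb : ∀ x y, b x y = x 0 * y 0 - ∑ i : Fin 6, x i.succ * y i.succ)
    (h : Fin 7 → ℤ) (l : Fin 6 → Fin 7 → ℤ)
    (hh : h = Pi.single 0 1)
    (hl : ∀ i, l i = Pi.single i.succ 1)
    (K : Fin 7 → ℤ)
    (hK : K = -(3 : ℤ) • h + ∑ i : Fin 6, l i)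
    (L : Set (Fin 7 → ℤ))
    (hL : L = {e | b e e = -1 ∧ b e K = -1})
    (T : Set (Finset (Fin 7 → ℤ)))
    (hT : T = {t : Finset (Fin 7 → ℤ) | t.card = 3 ∧ ↑t ⊆ L ∧
      ∀ e ∈ t, ∀ e' ∈ t, e ≠ e' → b e e' = 1}) :
    ∀ e ∈ L, Set.ncard {t | t ∈ T ∧ e ∈ t} = 5 := by
  intro e he
  obtain rfl : b = fun x y => intersectionForm x y := funext₂ hb
  obtain rfl : K = canonicalClass := by
    rw [hK, hh, funext hl]
    decide
  subst hL hT
  show Set.ncard {t | IsTriangle intersectionForm canonicalClass t ∧ e ∈ t} = 5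
  have hcount := two_mul_ncard_triangles_through intersectionForm_isSymm
    intersectionForm_canonicalClass_self eq_zero_of_orthogonal_canonicalClass he
    (s := {x ∈ lines | intersectionForm e x = 1}) (by simp [isLine_iff_mem_lines])
  rw [card_lines_meeting e ((isLine_iff_mem_lines e).1 he)] at hcount
  omega
end
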